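/- Let (X, ‖·‖) be a Banach space that admits a boundary contained in a norm-σ-compact subset of the dual unit ball B_{X*} (a countable union of norm-compact sets). Then, for every ε > 0, X admits an equivalent polyhedral norm |||·||| satisfying (1−ε)‖x‖ ≤ |||x||| ≤ (1+ε)‖x‖ for all x ∈ X, which admits a boundary having property (*). -/

import Mathlib

open NormedSpace Filter Set Topology Pointwise

noncomputable section

/-- `g` is a weak-* limit point of `F`: every weak-* neighbourhood of `g`
contains infinitely many points of `F`. -/
def IsWeakStarLimitPoint {X : Type*} [NormedAddCommGroup X] [NormedSpace ℝ X]
    (F : Set (StrongDual ℝ X)) (g : StrongDual ℝ X) : Prop :=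
  ∀ U : Set (WeakDual ℝ X), IsOpen U → StrongDual.toWeakDual g ∈ U →
    {f : StrongDual ℝ X | f ∈ F ∧ StrongDual.toWeakDual f ∈ U}.Infinite

/-- Property (*) of a set of functionals. -/
def PropertyStar {X : Type*} [NormedAddCommGroup X] [NormedSpace ℝ X]
    (F : Set (StrongDual ℝ X)) : Prop :=
  ∀ g : StrongDual ℝ X, IsWeakStarLimitPoint F g →
    ∀ x : X, sSup ((fun f : StrongDual ℝ X => f x) '' F) = 1 → g x < 1

/-- `F` is a relative boundary. -/
def IsRelativeBoundary {X : Type*} [NormedAddCommGroup X] [NormedSpace ℝ X]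
    (F : Set (StrongDual ℝ X)) : Prop :=
  ∀ x : X, sSup ((fun f : StrongDual ℝ X => f x) '' F) = 1 → ∃ f ∈ F, f x = 1

/-- `B` is a boundary for the norm `ν`: every element of `B` lies in the
`ν`-dual unit ball, and every `ν`-unit vector attains the value 1 at some member of `B`. -/
def IsBoundaryFor {X : Type*} [NormedAddCommGroup X] [NormedSpace ℝ X]
    (ν : X → ℝ) (B : Set (StrongDual ℝ X)) : Prop :=
  (∀ f ∈ B, ∀ x : X, f x ≤ ν x) ∧ ∀ x : X, ν x = 1 → ∃ f ∈ B, f x = 1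

/-- `ν` is an equivalent norm on `X`. -/
def IsEquivNorm {X : Type*} [NormedAddCommGroup X] [NormedSpace ℝ X]
    (ν : Seminorm ℝ X) : Prop :=
  ∃ c C : ℝ, 0 < c ∧ ∀ x : X, c * ‖x‖ ≤ ν x ∧ ν x ≤ C * ‖x‖

/-- A norm (given as a function) is polyhedral if the unit ball of every
finite-dimensional subspace is a polytope, i.e. the convex hull of finitely many points. -/
def IsPolyhedralNorm {X : Type*} [NormedAddCommGroup X] [NormedSpace ℝ X]
    (ν : X → ℝ) : Prop :=
  ∀ Y : Subspace ℝ X, FiniteDimensional ℝ Y →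
    ∃ T : Set X, T.Finite ∧ {x : X | x ∈ Y ∧ ν x ≤ 1} = convexHull ℝ T

/-- `E ⊆ X*` is weak-* locally relatively norm-compact. -/
def IsWeakStarLRC {X : Type*} [NormedAddCommGroup X] [NormedSpace ℝ X]
    (E : Set (StrongDual ℝ X)) : Prop :=
  ∀ y ∈ E, ∃ U : Set (WeakDual ℝ X), IsOpen U ∧ StrongDual.toWeakDual y ∈ U ∧
    IsCompact (closure (E ∩ (fun f : StrongDual ℝ X => StrongDual.toWeakDual f) ⁻¹' U))

/-- `E` is a countable union of weak-* LRC sets. -/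
def IsSigmaWeakStarLRC {X : Type*} [NormedAddCommGroup X] [NormedSpace ℝ X]
    (E : Set (StrongDual ℝ X)) : Prop :=
  ∃ E' : ℕ → Set (StrongDual ℝ X), E = ⋃ n, E' n ∧ ∀ n, IsWeakStarLRC (E' n)

/-- `E` is a countable union of weak-*-compact sets. -/
def IsWeakStarSigmaCompact {X : Type*} [NormedAddCommGroup X] [NormedSpace ℝ X]
    (E : Set (StrongDual ℝ X)) : Prop :=
  ∃ C : ℕ → Set (WeakDual ℝ X), (∀ n, IsCompact (C n)) ∧
    (fun f : StrongDual ℝ X => StrongDual.toWeakDual f) '' E = ⋃ n, C n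

/-! Cover each compact piece `Kc n` by a finite `ρₙ`-net `Fₙ` and let `D = ⋃ₙ ±aₙ Fₙ`, where
`aₙ = 1 + ε / (n + 1)` decreases strictly and `ρₙ` is chosen with `aₙ (1 - ρₙ) = aₙ₊₁`. The new
norm is `ν x = sup_{f ∈ D} f x`. Since `B` is a boundary, every `x ≠ 0` is normed by some
`f ∈ Kc m`, so a member of `aₘ Fₘ` takes a value `≥ aₘ₊₁ ‖x‖` at `x`, while all members of the
stages `n ≥ m + 2` stay `≤ aₘ₊₂ ‖x‖`. Hence only finitely many members of `D` come close to
`ν x`. This makes `D` a boundary of `ν`, keeps weak-* limit points of `D` strictly below `ν`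
(property (*)), and, by compactness of the unit sphere of a finite-dimensional subspace `Y`,
makes `ν` on `Y` the maximum of finitely many functionals. The unit ball of `Y` is then a
compact polyhedron, whose extreme points are determined by their active constraints; by
Krein–Milman it is the convex hull of these finitely many points. -/

theorem finite_sep_iUnion_of_forall_ge {α : Type*} {s : ℕ → Set α} (hs : ∀ n, (s n).Finite)
    {p : α → Prop} {N : ℕ} (hp : ∀ n ≥ N, ∀ a ∈ s n, ¬p a) : {a ∈ ⋃ n, s n | p a}.Finite := by
  refine ((finite_lt_nat N).biUnion fun n _ => hs n).subset ?_
  rintro a ⟨ha, hpa⟩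
  obtain ⟨n, hn⟩ := mem_iUnion.1 ha
  exact mem_biUnion (not_le.1 fun h => hp n h a hn hpa) hn

theorem IsCompact.eq_convexHull_extremePoints {E : Type*} [AddCommGroup E] [Module ℝ E]
    [TopologicalSpace E] [T2Space E] [IsTopologicalAddGroup E] [ContinuousSMul ℝ E]
    [LocallyConvexSpace ℝ E] {s : Set E} (hs : IsCompact s) (hconv : Convex ℝ s)
    (hfin : (s.extremePoints ℝ).Finite) : s = convexHull ℝ (s.extremePoints ℝ) :=
  (closure_convexHull_extremePoints hs hconv).symm.trans
    (hfin.isCompact_convexHull ℝ).isClosed.closure_eq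

section Renorming

variable {X : Type*} [NormedAddCommGroup X] [NormedSpace ℝ X]

theorem Submodule.isCompact_of_isClosed_of_subset_closedBall (Y : Submodule ℝ X)
    [FiniteDimensional ℝ Y] {S : Set X} {R : ℝ} (hSY : S ⊆ Y) (hS : IsClosed S)
    (hSR : S ⊆ Metric.closedBall 0 R) : IsCompact S :=
  ((isCompact_closedBall (0 : Y) R).image continuous_subtype_val).of_isClosed_subset hS
    fun x hx => ⟨⟨x, hSY hx⟩, by simpa using hSR hx, rfl⟩

theorem StrongDual.apply_le_of_norm_le {f : StrongDual ℝ X} {C : ℝ} (hf : ‖f‖ ≤ C) (x : X) :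
    f x ≤ C * ‖x‖ :=
  (Real.le_norm_self _).trans (f.le_of_opNorm_le hf x)

theorem StrongDual.apply_sub_apply_le_of_norm_le {f : StrongDual ℝ X} {C : ℝ} (hf : ‖f‖ ≤ C)
    (x y : X) : f x - f y ≤ C * ‖x - y‖ := by
  rw [← map_sub]
  exact apply_le_of_norm_le hf _

theorem IsBoundaryFor.exists_apply_eq_norm {B : Set (StrongDual ℝ X)}
    (hB : IsBoundaryFor (fun x : X => ‖x‖) B) {x : X} (hx : x ≠ 0) : ∃ f ∈ B, f x = ‖x‖ := by
  have hx' : ‖x‖ ≠ 0 := norm_ne_zero_iff.2 hx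
  obtain ⟨f, hfB, hf⟩ := hB.2 (‖x‖⁻¹ • x) (by
    show ‖‖x‖⁻¹ • x‖ = 1
    rw [norm_smul, norm_inv, norm_norm, inv_mul_cancel₀ hx'])
  rw [map_smul, smul_eq_mul, inv_mul_eq_one₀ hx'] at hf
  exact ⟨f, hfB, hf.symm⟩

theorem IsWeakStarLimitPoint.apply_le {F : Set (StrongDual ℝ X)} {g : StrongDual ℝ X}
    (hg : IsWeakStarLimitPoint F g) {x : X} {c : ℝ} (hfin : {f ∈ F | c < f x}.Finite) :
    g x ≤ c := by
  by_contra h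
  exact hg {φ : WeakDual ℝ X | c < φ x} (isOpen_lt continuous_const (WeakDual.eval_continuous x))
    (not_le.1 h) hfin

section SupEval

def supEval (D : Set (StrongDual ℝ X)) (x : X) : ℝ := sSup ((fun f : StrongDual ℝ X => f x) '' D)

variable {D : Set (StrongDual ℝ X)} {C : ℝ}

theorem apply_le_supEval (hD : ∀ f ∈ D, ‖f‖ ≤ C) {f : StrongDual ℝ X} (hf : f ∈ D) (x : X) :
    f x ≤ supEval D x :=
  le_csSup ⟨C * ‖x‖, by
    rintro _ ⟨g, hg, rfl⟩
    exact StrongDual.apply_le_of_norm_le (hD g hg) x⟩ ⟨f, hf, rfl⟩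

theorem supEval_le (hD : ∀ f ∈ D, ‖f‖ ≤ C) (hC : 0 ≤ C) (x : X) : supEval D x ≤ C * ‖x‖ :=
  Real.sSup_le (by
    rintro _ ⟨g, hg, rfl⟩
    exact StrongDual.apply_le_of_norm_le (hD g hg) x) (by positivity)

theorem supEval_smul_of_nonneg {a : ℝ} (ha : 0 ≤ a) (x : X) :
    supEval D (a • x) = a * supEval D x := by
  rw [supEval, supEval, ← smul_eq_mul, ← Real.sSup_smul_of_nonneg ha, ← Set.image_smul,
    Set.image_image]
  simp only [map_smul, smul_eq_mul]

theorem supEval_zero : supEval D (0 : X) = 0 := by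
  simpa using supEval_smul_of_nonneg (D := D) le_rfl (0 : X)

theorem supEval_neg (hneg : ∀ f ∈ D, -f ∈ D) (x : X) : supEval D (-x) = supEval D x := by
  have : (fun f : StrongDual ℝ X => f (-x)) '' D = (fun f => f x) '' D := by
    ext v
    constructor <;> rintro ⟨f, hf, rfl⟩ <;> exact ⟨-f, hneg f hf, by simp⟩
  rw [supEval, this, supEval]

theorem supEval_smul (hneg : ∀ f ∈ D, -f ∈ D) (a : ℝ) (x : X) :
    supEval D (a • x) = ‖a‖ * supEval D x := by
  rcases le_total 0 a with ha | ha
  · rw [supEval_smul_of_nonneg ha, Real.norm_of_nonneg ha]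
  · rw [show a • x = -((-a) • x) by simp, supEval_neg hneg,
      supEval_smul_of_nonneg (neg_nonneg.2 ha), Real.norm_of_nonpos ha]

theorem supEval_nonneg (hneg : ∀ f ∈ D, -f ∈ D) (x : X) : 0 ≤ supEval D x := by
  rcases D.eq_empty_or_nonempty with rfl | ⟨f, hf⟩
  · simp [supEval]
  · apply Real.sSup_nonneg'
    rcases le_total 0 (f x) with h | h
    · exact ⟨f x, ⟨f, hf, rfl⟩, h⟩
    · exact ⟨(-f) x, ⟨-f, hneg f hf, rfl⟩, by simpa using h⟩

theorem supEval_add_le (hD : ∀ f ∈ D, ‖f‖ ≤ C) (hneg : ∀ f ∈ D, -f ∈ D) (x y : X) :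
    supEval D (x + y) ≤ supEval D x + supEval D y :=
  Real.sSup_le (by
      rintro _ ⟨f, hf, rfl⟩
      exact (map_add f x y).trans_le <|
        add_le_add (apply_le_supEval hD hf x) (apply_le_supEval hD hf y))
    (add_nonneg (supEval_nonneg hneg x) (supEval_nonneg hneg y))

def supSeminorm (hD : ∀ f ∈ D, ‖f‖ ≤ C) (hneg : ∀ f ∈ D, -f ∈ D) : Seminorm ℝ X :=
  Seminorm.of (supEval D) (supEval_add_le hD hneg) (supEval_smul hneg)

theorem continuous_supSeminorm (hD : ∀ f ∈ D, ‖f‖ ≤ C) (hneg : ∀ f ∈ D, -f ∈ D) (hC : 0 ≤ C) :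
    Continuous (supSeminorm hD hneg) := by
  refine (LipschitzWith.of_le_add_mul' C fun x y => ?_).continuous
  calc supSeminorm hD hneg x ≤ supSeminorm hD hneg y + supSeminorm hD hneg (x - y) := by
        simpa using map_add_le_add (supSeminorm hD hneg) y (x - y)
    _ ≤ supSeminorm hD hneg y + C * dist x y := by
        rw [dist_eq_norm]
        gcongr
        exact supEval_le hD hC (x - y)

theorem exists_apply_eq_supEval (hD : ∀ f ∈ D, ‖f‖ ≤ C) {x : X} {c : ℝ} (hc0 : 0 ≤ c)
    (hc : c < supEval D x) (hfin : {f ∈ D | c < f x}.Finite) :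
    ∃ f ∈ D, c < f x ∧ f x = supEval D x := by
  have hne : {f ∈ D | c < f x}.Nonempty := by
    by_contra h
    refine hc.not_ge (Real.sSup_le ?_ hc0)
    rintro _ ⟨f, hf, rfl⟩
    exact le_of_not_gt fun hlt => h ⟨f, hf, hlt⟩
  obtain ⟨f, ⟨hfD, hfc⟩, hmax⟩ := Set.exists_max_image _ (fun f : StrongDual ℝ X => f x) hfin hne
  refine ⟨f, hfD, hfc, le_antisymm (apply_le_supEval hD hfD x) (Real.sSup_le ?_ (hc0.trans hfc.le))⟩
  rintro _ ⟨g, hg, rfl⟩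
  by_cases hgc : c < g x
  · exact hmax g ⟨hg, hgc⟩
  · exact (not_lt.1 hgc).trans hfc.le

-- `0 ≤ c` guards against the junk value `sSup ∅ = 0` of `supEval ∅ x`.
def FiniteNearSup (D : Set (StrongDual ℝ X)) : Prop :=
  ∀ x : X, x ≠ 0 → ∃ c, 0 ≤ c ∧ c < supEval D x ∧ {f ∈ D | c < f x}.Finite

theorem FiniteNearSup.isBoundaryFor (hD : ∀ f ∈ D, ‖f‖ ≤ C) (hfin : FiniteNearSup D) :
    IsBoundaryFor (supEval D) D := by
  refine ⟨fun f hf x => apply_le_supEval hD hf x, fun x hx => ?_⟩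
  have hx0 : x ≠ 0 := by
    rintro rfl
    simp [supEval_zero] at hx
  obtain ⟨c, hc0, hc, hA⟩ := hfin x hx0
  obtain ⟨f, hf, -, hfx⟩ := exists_apply_eq_supEval hD hc0 hc hA
  exact ⟨f, hf, hfx.trans hx⟩

theorem FiniteNearSup.propertyStar (hfin : FiniteNearSup D) : PropertyStar D := by
  intro g hg x hx
  change supEval D x = 1 at hx
  have hx0 : x ≠ 0 := by
    rintro rfl
    simp [supEval_zero] at hx
  obtain ⟨c, -, hc, hA⟩ := hfin x hx0
  exact (hg.apply_le hA).trans_lt (hc.trans_eq hx)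

theorem FiniteNearSup.eventually_exists_apply_eq (hD : ∀ f ∈ D, ‖f‖ ≤ C)
    (hfin : FiniteNearSup D) {x₀ : X} (hx₀ : x₀ ≠ 0) :
    ∃ A ⊆ D, A.Finite ∧ ∀ᶠ x in 𝓝 x₀, ∃ f ∈ A, f x = supEval D x := by
  obtain ⟨c, hc0, hc, hA⟩ := hfin x₀ hx₀
  obtain ⟨f₀, hf₀, -, hf₀x₀⟩ := exists_apply_eq_supEval hD hc0 hc hA
  set δ := (supEval D x₀ - c) / 2 with hδ
  have hδpos : 0 < δ := by linarith
  have hnear : ∀ᶠ x in 𝓝 x₀, C * ‖x - x₀‖ < δ := by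
    have hcont : Continuous fun x => C * ‖x - x₀‖ := by fun_prop
    have : Tendsto (fun x => C * ‖x - x₀‖) (𝓝 x₀) (𝓝 0) := by simpa using hcont.tendsto x₀
    exact this.eventually (gt_mem_nhds hδpos)
  refine ⟨_, sep_subset _ _, hA, hnear.mono fun x hx => ?_⟩
  have hcx : c + δ < supEval D x := by
    have := StrongDual.apply_sub_apply_le_of_norm_le (hD f₀ hf₀) x₀ x
    rw [norm_sub_rev] at this
    linarith [apply_le_supEval hD hf₀ x]
  have hsub : {f ∈ D | c + δ < f x} ⊆ {f ∈ D | c < f x₀} := fun f ⟨hf, hfx⟩ =>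
    ⟨hf, by linarith [StrongDual.apply_sub_apply_le_of_norm_le (hD f hf) x x₀]⟩
  obtain ⟨f, hf, hfx, hfeq⟩ :=
    exists_apply_eq_supEval hD (by linarith) hcx (hA.subset hsub)
  exact ⟨f, hsub ⟨hf, hfx⟩, hfeq⟩

end SupEval

theorem IsCompact.exists_finite_apply_eq {p : X → ℝ} {K : Set X} (hK : IsCompact K)
    {D : Set (StrongDual ℝ X)}
    (hloc : ∀ x ∈ K, ∃ A ⊆ D, A.Finite ∧ ∀ᶠ y in 𝓝 x, ∃ f ∈ A, f y = p y) :
    ∃ G ⊆ D, G.Finite ∧ ∀ x ∈ K, ∃ f ∈ G, f x = p x := by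
  choose! A hAD hAfin hAev using hloc
  obtain ⟨t, htK, hcover⟩ := hK.elim_nhds_subcover (fun x => {y | ∃ f ∈ A x, f y = p y}) hAev
  refine ⟨⋃ x ∈ t, A x, iUnion₂_subset fun x hx => hAD x (htK x hx),
    t.finite_toSet.biUnion fun x hx => hAfin x (htK x hx), fun y hy => ?_⟩
  obtain ⟨x, hx, f, hf, hfy⟩ : ∃ x ∈ t, ∃ f ∈ A x, f y = p y := by simpa using hcover hy
  exact ⟨f, mem_biUnion hx hf, hfy⟩

-- The line through `e₁` in direction `e₁ - e₂` stays in the polyhedron near `e₁`.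
theorem eq_of_mem_extremePoints_of_forall_apply_eq_one (Y : Submodule ℝ X)
    {G : Set (StrongDual ℝ X)} (hG : G.Finite) {e₁ e₂ : X}
    (he₁ : e₁ ∈ {x | x ∈ Y ∧ ∀ f ∈ G, f x ≤ 1}.extremePoints ℝ)
    (he₂ : e₂ ∈ {x | x ∈ Y ∧ ∀ f ∈ G, f x ≤ 1}) (h : ∀ f ∈ G, f e₁ = 1 → f e₂ = 1) :
    e₁ = e₂ := by
  set v := e₁ - e₂
  have hline : ∀ᶠ t in 𝓝 (0 : ℝ), e₁ + t • v ∈ {x | x ∈ Y ∧ ∀ f ∈ G, f x ≤ 1} := by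
    have hall : ∀ f ∈ G, ∀ᶠ t in 𝓝 (0 : ℝ), f (e₁ + t • v) ≤ 1 := by
      intro f hf
      rcases (he₁.1.2 f hf).eq_or_lt with h1 | h1
      · have hv : f v = 0 := by simp [v, h1, h f hf h1]
        exact Eventually.of_forall fun t => by simp [hv, h1]
      · have hcont : Continuous fun t : ℝ => f (e₁ + t • v) := by fun_prop
        exact ((hcont.tendsto 0).eventually (gt_mem_nhds (by simpa using h1))).mono
          fun _ => le_of_lt
    filter_upwards [(eventually_all_finite hG).2 hall] with t ht
    exact ⟨Y.add_mem he₁.1.1 (Y.smul_mem t (Y.sub_mem he₁.1.1 he₂.1)), ht⟩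
  have hline' := (continuous_neg.tendsto' (0 : ℝ) 0 neg_zero).eventually hline
  obtain ⟨t, ⟨htp, htn⟩, ht0⟩ :=
    (((hline.and hline').filter_mono nhdsWithin_le_nhds).and
      (self_mem_nhdsWithin : {(0 : ℝ)}ᶜ ∈ 𝓝[≠] 0)).exists
  have hmid := (mem_extremePoints.1 he₁).2 _ htp _ htn
    ⟨1 / 2, 1 / 2, by norm_num, by norm_num, by norm_num, by module⟩
  have htv : t • v = 0 := by simpa using hmid.1
  exact sub_eq_zero.1 ((smul_eq_zero.1 htv).resolve_left ht0)

theorem finite_extremePoints_setOf_forall_apply_le_one (Y : Submodule ℝ X)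
    {G : Set (StrongDual ℝ X)} (hG : G.Finite) :
    ({x | x ∈ Y ∧ ∀ f ∈ G, f x ≤ 1}.extremePoints ℝ).Finite := by
  refine Set.Finite.of_finite_image (f := fun e => {f ∈ G | f e = 1})
    (hG.finite_subsets.subset ?_) fun e₁ he₁ e₂ he₂ hact => ?_
  · rintro _ ⟨e, -, rfl⟩
    exact sep_subset _ _
  · refine eq_of_mem_extremePoints_of_forall_apply_eq_one Y hG he₁ he₂.1 fun f hf hf1 => ?_
    exact ((Set.ext_iff.1 hact f).1 ⟨hf, hf1⟩).2

theorem isPolyhedralNorm_of_eventually_exists_apply_eq (p : Seminorm ℝ X) (hp : Continuous p)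
    {c : ℝ} (hc : 0 < c) (hpc : ∀ x, c * ‖x‖ ≤ p x) {D : Set (StrongDual ℝ X)}
    (hD : ∀ f ∈ D, ∀ x, f x ≤ p x)
    (hloc : ∀ x : X, x ≠ 0 → ∃ A ⊆ D, A.Finite ∧ ∀ᶠ y in 𝓝 x, ∃ f ∈ A, f y = p y) :
    IsPolyhedralNorm (fun x => p x) := by
  intro Y _
  have hYc : IsClosed (Y : Set X) := Y.closed_of_finiteDimensional
  have hball : ∀ x, p x ≤ 1 → x ∈ Metric.closedBall (0 : X) (1 / c) := fun x hx => by
    rw [mem_closedBall_zero_iff, le_div_iff₀' hc]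
    exact (hpc x).trans hx
  obtain ⟨G, hGD, hGfin, hGeq⟩ : ∃ G ⊆ D, G.Finite ∧
      ∀ x ∈ {x | x ∈ Y ∧ p x = 1}, ∃ f ∈ G, f x = p x := by
    refine IsCompact.exists_finite_apply_eq ?_ fun x hx => hloc x ?_
    · exact Y.isCompact_of_isClosed_of_subset_closedBall (fun x hx => hx.1)
        (hYc.inter (isClosed_eq hp continuous_const)) fun x hx => hball x hx.2.le
    · rintro rfl
      simp at hx
  set P := {x | x ∈ Y ∧ p x ≤ 1}
  have hPG : P = {x | x ∈ Y ∧ ∀ f ∈ G, f x ≤ 1} := by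
    ext x
    refine and_congr_right fun hx => ⟨fun h f hf => (hD f (hGD hf) x).trans h, fun h => ?_⟩
    by_contra! h1
    have hpx : 0 < p x := one_pos.trans h1
    obtain ⟨f, hf, hfx⟩ := hGeq ((p x)⁻¹ • x) ⟨Y.smul_mem _ hx, by
      rw [map_smul_eq_mul, norm_inv, Real.norm_of_nonneg hpx.le, inv_mul_cancel₀ hpx.ne']⟩
    rw [map_smul, map_smul_eq_mul, smul_eq_mul, norm_inv, Real.norm_of_nonneg hpx.le,
      mul_left_cancel_iff_of_pos (inv_pos.2 hpx)] at hfx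
    linarith [h f hf]
  have hPcompact : IsCompact P := Y.isCompact_of_isClosed_of_subset_closedBall (fun x hx => hx.1)
    (hYc.inter (isClosed_le hp continuous_const)) fun x hx => hball x hx.2
  have hPconvex : Convex ℝ P := by
    have := p.convexOn.convex_le 1
    simp only [mem_univ, true_and] at this
    exact Y.convex.inter this
  have hPext : (P.extremePoints ℝ).Finite :=
    hPG ▸ finite_extremePoints_setOf_forall_apply_le_one Y hGfin
  exact ⟨_, hPext, hPcompact.eq_convexHull_extremePoints hPconvex hPext⟩

theorem exists_finite_stages {Kc : ℕ → Set (StrongDual ℝ X)} (hKc : ∀ n, IsCompact (Kc n))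
    (hKball : (⋃ n, Kc n) ⊆ {f : StrongDual ℝ X | ‖f‖ ≤ 1}) {B : Set (StrongDual ℝ X)}
    (hBK : B ⊆ ⋃ n, Kc n) (hB : IsBoundaryFor (fun x : X => ‖x‖) B) {a : ℕ → ℝ}
    (ha : ∀ n, 0 < a n) (ha' : ∀ n, a (n + 1) < a n) :
    ∃ D : ℕ → Set (StrongDual ℝ X), (∀ n, (D n).Finite) ∧ (∀ n, ∀ f ∈ D n, ‖f‖ ≤ a n) ∧
      (∀ n, ∀ f ∈ D n, -f ∈ D n) ∧ ∀ x : X, x ≠ 0 → ∃ m, ∃ h ∈ D m, a (m + 1) * ‖x‖ ≤ h x := by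
  have hρ : ∀ n, 0 < 1 - a (n + 1) / a n := fun n => sub_pos.2 ((div_lt_one (ha n)).2 (ha' n))
  choose F hFK hFfin hFcov using fun n => finite_cover_balls_of_compact (hKc n) (hρ n)
  have hF : ∀ n, ∀ f ∈ a n • F n, ‖f‖ ≤ a n := by
    rintro n _ ⟨f, hf, rfl⟩
    rw [norm_smul, Real.norm_of_nonneg (ha n).le]
    exact mul_le_of_le_one_right (ha n).le (hKball (mem_iUnion_of_mem n (hFK n hf)))
  refine ⟨fun n => a n • F n ∪ -(a n • F n),
    fun n => (hFfin n).smul_set.union (hFfin n).smul_set.neg, ?_, ?_, fun x hx => ?_⟩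
  · rintro n f (hf | hf)
    · exact hF n f hf
    · simpa using hF n (-f) hf
  · rintro n f (hf | hf)
    · exact Or.inr (by simpa using hf)
    · exact Or.inl hf
  obtain ⟨f, hfB, hfx⟩ := hB.exists_apply_eq_norm hx
  obtain ⟨m, hfm⟩ := mem_iUnion.1 (hBK hfB)
  obtain ⟨g, hgF, hfg⟩ := mem_iUnion₂.1 (hFcov m hfm)
  have hgx : a (m + 1) / a m * ‖x‖ ≤ g x := by
    have := StrongDual.apply_le_of_norm_le (mem_ball_iff_norm.1 hfg).le x
    change f x - g x ≤ _ at this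
    rw [hfx] at this
    linarith
  refine ⟨m, a m • g, Or.inl (smul_mem_smul_set hgF), ?_⟩
  calc a (m + 1) * ‖x‖ = a m * (a (m + 1) / a m * ‖x‖) := by field_simp [(ha m).ne']
    _ ≤ a m * g x := by gcongr; exact (ha m).le
    _ = (a m • g) x := rfl

theorem exists_finiteNearSup {Kc : ℕ → Set (StrongDual ℝ X)} (hKc : ∀ n, IsCompact (Kc n))
    (hKball : (⋃ n, Kc n) ⊆ {f : StrongDual ℝ X | ‖f‖ ≤ 1}) {B : Set (StrongDual ℝ X)}
    (hBK : B ⊆ ⋃ n, Kc n) (hB : IsBoundaryFor (fun x : X => ‖x‖) B) {ε : ℝ} (hε : 0 < ε) :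
    ∃ D : Set (StrongDual ℝ X), (∀ f ∈ D, ‖f‖ ≤ 1 + ε) ∧ (∀ f ∈ D, -f ∈ D) ∧
      (∀ x, ‖x‖ ≤ supEval D x) ∧ FiniteNearSup D := by
  set a : ℕ → ℝ := fun n => 1 + ε / (n + 1)
  have ha1 : ∀ n, 1 ≤ a n := fun n => le_add_of_nonneg_right (by positivity)
  have haε : ∀ n, a n ≤ 1 + ε := fun n =>
    add_le_add_right (div_le_self hε.le (by simp)) 1
  have ha : StrictAnti a := fun m n hmn =>
    add_lt_add_right (div_lt_div_of_pos_left hε (by positivity) (by simpa using hmn)) 1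
  obtain ⟨Dn, hfin, hnorm, hneg, hkey⟩ := exists_finite_stages hKc hKball hBK hB
    (fun n => one_pos.trans_le (ha1 n)) fun n => ha (Nat.lt_succ_self n)
  have hD : ∀ f ∈ ⋃ n, Dn n, ‖f‖ ≤ 1 + ε := fun f hf =>
    let ⟨n, hn⟩ := mem_iUnion.1 hf
    (hnorm n f hn).trans (haε n)
  have hlow : ∀ x : X, x ≠ 0 → ∃ m, a (m + 1) * ‖x‖ ≤ supEval (⋃ n, Dn n) x := fun x hx =>
    let ⟨m, h, hh, hhx⟩ := hkey x hx
    ⟨m, hhx.trans (apply_le_supEval hD (mem_iUnion_of_mem m hh) x)⟩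
  refine ⟨⋃ n, Dn n, hD, fun f hf => ?_, fun x => ?_, fun x hx => ?_⟩
  · obtain ⟨n, hn⟩ := mem_iUnion.1 hf
    exact mem_iUnion_of_mem n (hneg n f hn)
  · rcases eq_or_ne x 0 with rfl | hx
    · simp [supEval_zero]
    · obtain ⟨m, hm⟩ := hlow x hx
      exact (le_mul_of_one_le_left (norm_nonneg x) (ha1 _)).trans hm
  obtain ⟨m, hm⟩ := hlow x hx
  refine ⟨a (m + 2) * ‖x‖, mul_nonneg (zero_le_one.trans (ha1 _)) (norm_nonneg x),
    (mul_lt_mul_of_pos_right (ha (by omega)) (norm_pos_iff.2 hx)).trans_le hm,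
    finite_sep_iUnion_of_forall_ge hfin (N := m + 2) fun n hn f hf => not_lt.2 ?_⟩
  exact (StrongDual.apply_le_of_norm_le (hnorm n f hf) x).trans
    (mul_le_mul_of_nonneg_right (ha.antitone hn) (norm_nonneg x))

end Renorming

theorem stmt13 {X : Type*} [NormedAddCommGroup X] [NormedSpace ℝ X]
    (Kc : ℕ → Set (StrongDual ℝ X)) (hKc : ∀ n, IsCompact (Kc n))
    (hKball : (⋃ n, Kc n) ⊆ {f : StrongDual ℝ X | ‖f‖ ≤ 1})
    (B : Set (StrongDual ℝ X)) (hBK : B ⊆ ⋃ n, Kc n)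
    (hB : IsBoundaryFor (fun x : X => ‖x‖) B)
    (ε : ℝ) (hε : 0 < ε) :
    ∃ ν : Seminorm ℝ X,
      (∀ x : X, (1 - ε) * ‖x‖ ≤ ν x ∧ ν x ≤ (1 + ε) * ‖x‖) ∧
      IsPolyhedralNorm (fun x => ν x) ∧
      ∃ D : Set (StrongDual ℝ X), IsBoundaryFor (fun x => ν x) D ∧ PropertyStar D := by
  obtain ⟨D, hD, hneg, hlow, hfin⟩ := exists_finiteNearSup hKc hKball hBK hB hε
  refine ⟨supSeminorm hD hneg, fun x => ⟨?_, supEval_le hD (by linarith) x⟩, ?_, D,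
    hfin.isBoundaryFor hD, hfin.propertyStar⟩
  · exact (mul_le_of_le_one_left (norm_nonneg x) (by linarith)).trans (hlow x)
  · exact isPolyhedralNorm_of_eventually_exists_apply_eq _
      (continuous_supSeminorm hD hneg (by linarith)) one_pos
      (fun x => (one_mul _).trans_le (hlow x))
      (fun f hf => apply_le_supEval hD hf) fun x hx => hfin.eventually_exists_apply_eq hD hx
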